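/- arXiv:1710.00956 — 2 statements merged into one kernel-verified Lean document; each statement's English description precedes it below -/
import Mathlib

section
/- Let {x_i}_{i∈T} ⊆ ℝ^m and let C_1 ⊔ ⋯ ⊔ C_k = T be a partition of T into k nonempty parts. Then the matrix X = Σ_{t=1}^k (1/|C_t|) 1_{C_t} 1_{C_t}^⊤ satisfies X1 = 1, tr(X) = k, X is entrywise nonnegative and positive semidefinite, and moreover (1/(2|T|)) tr(D_T X) equals the k-means objective value (1/|T|) Σ_{t∈[k]} Σ_{i∈C_t} ‖x_i − (1/|C_t|) Σ_{j∈C_t} x_j‖² of the partition. -/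
/-!
`X` is a nonnegative combination of the rank-one matrices `1_C 1_Cᵀ`, hence entrywise nonnegative
and positive semidefinite; `X 1 = ∑ₜ 1_{Cₜ} = 1` because the parts partition `T`, and each part
contributes `1` to the trace. For the objective, `tr (D X) = ∑ₜ |Cₜ|⁻¹ ∑_{i,j ∈ Cₜ} ‖xᵢ - xⱼ‖²`, and
within one part the pairwise sum is `2 |C|` times the sum of squared distances to the centroid:
expand `‖(xᵢ - c) - (xⱼ - c)‖²` and use that the deviations `xᵢ - c` sum to zero.
-/

open Finset Matrix

section Centroid

variable {T E : Type*} [NormedAddCommGroup E] [InnerProductSpace ℝ E]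

theorem sum_sum_norm_sub_sq (s : Finset T) (y : T → E) :
    ∑ i ∈ s, ∑ j ∈ s, ‖y i - y j‖ ^ 2
      = 2 * s.card * ∑ i ∈ s, ‖y i‖ ^ 2 - 2 * ‖∑ i ∈ s, y i‖ ^ 2 := by
  simp_rw [norm_sub_sq_real, sum_add_distrib, sum_sub_distrib, sum_const, nsmul_eq_mul,
    ← mul_sum, ← inner_sum, ← sum_inner, real_inner_self_eq_norm_sq]
  ring

theorem sum_sub_centroid_eq_zero (s : Finset T) (x : T → E) :
    ∑ i ∈ s, (x i - (s.card : ℝ)⁻¹ • ∑ j ∈ s, x j) = 0 := by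
  rcases s.eq_empty_or_nonempty with rfl | hs
  · simp
  · rw [sum_sub_distrib, sum_const, ← Nat.cast_smul_eq_nsmul ℝ, smul_smul,
      mul_inv_cancel₀ (by exact_mod_cast hs.card_pos.ne'), one_smul, sub_self]

theorem sum_sum_norm_sub_sq_eq_sum_norm_sub_centroid_sq (s : Finset T) (x : T → E) :
    ∑ i ∈ s, ∑ j ∈ s, ‖x i - x j‖ ^ 2
      = 2 * s.card * ∑ i ∈ s, ‖x i - (s.card : ℝ)⁻¹ • ∑ j ∈ s, x j‖ ^ 2 := by
  have h := sum_sum_norm_sub_sq s (fun i => x i - (s.card : ℝ)⁻¹ • ∑ j ∈ s, x j)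
  simp only [sub_sub_sub_cancel_right, sum_sub_centroid_eq_zero] at h
  simpa using h

end Centroid

section Indicator

variable {T R : Type*} [DecidableEq T] [CommSemiring R]

def indicatorVec (s : Finset T) : T → R := fun i => if i ∈ s then 1 else 0

variable [Fintype T]

theorem indicatorVec_dotProduct (s : Finset T) (v : T → R) :
    indicatorVec s ⬝ᵥ v = ∑ i ∈ s, v i := by
  simp [indicatorVec, dotProduct, ite_mul, Finset.sum_ite_mem]

theorem dotProduct_indicatorVec (s : Finset T) (v : T → R) :
    v ⬝ᵥ indicatorVec s = ∑ i ∈ s, v i := by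
  rw [dotProduct_comm, indicatorVec_dotProduct]

theorem indicatorVec_dotProduct_self (s : Finset T) :
    indicatorVec s ⬝ᵥ (indicatorVec s : T → R) = s.card := by
  simp [indicatorVec_dotProduct, indicatorVec]

theorem sum_indicatorVec_of_partition {ι : Type*} [Fintype ι] {C : ι → Finset T}
    (hdisj : ∀ t t', t ≠ t' → Disjoint (C t) (C t'))
    (hcover : univ.biUnion C = univ) (i : T) :
    ∑ t, (indicatorVec (C t) i : R) = 1 := by
  obtain ⟨t₀, -, hi⟩ := mem_biUnion.mp (hcover ▸ mem_univ i)
  rw [Finset.sum_eq_single t₀ (fun t _ ht => ?_) (by simp)]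
  · simp [indicatorVec, hi]
  · simp [indicatorVec, disjoint_left.mp (hdisj t₀ t (Ne.symm ht)) hi]

end Indicator

section ClusterMatrix

variable {T ι : Type*} [DecidableEq T] [Fintype ι]

noncomputable def clusterMatrix (C : ι → Finset T) : Matrix T T ℝ :=
  ∑ t, ((C t).card : ℝ)⁻¹ • vecMulVec (indicatorVec (C t)) (indicatorVec (C t))

theorem clusterMatrix_nonneg (C : ι → Finset T) (i j : T) : 0 ≤ clusterMatrix C i j := by
  simp only [clusterMatrix, Matrix.sum_apply, Matrix.smul_apply, vecMulVec_apply, smul_eq_mul]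
  exact sum_nonneg fun t _ => by unfold indicatorVec; positivity

variable [Fintype T]

theorem posSemidef_clusterMatrix (C : ι → Finset T) : (clusterMatrix C).PosSemidef := by
  refine posSemidef_sum _ fun t _ => PosSemidef.smul ?_ (by positivity)
  simpa using posSemidef_vecMulVec_self_star (indicatorVec (C t) : T → ℝ)

theorem clusterMatrix_mulVec_one {C : ι → Finset T}
    (hdisj : ∀ t t', t ≠ t' → Disjoint (C t) (C t'))
    (hcover : univ.biUnion C = univ) :
    clusterMatrix C *ᵥ (fun _ => 1) = fun _ => 1 := by
  have hcol (t : ι) : ((C t).card : ℝ)⁻¹ • (vecMulVec (indicatorVec (C t)) (indicatorVec (C t))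
      *ᵥ fun _ => (1 : ℝ)) = indicatorVec (C t) := by
    rcases (C t).eq_empty_or_nonempty with h | h
    · ext i; simp [h, indicatorVec]
    · rw [vecMulVec_mulVec, op_smul_eq_smul, indicatorVec_dotProduct, smul_smul]
      simp [h.card_pos.ne']
  ext i
  simp only [clusterMatrix, sum_mulVec, smul_mulVec, hcol, Finset.sum_apply]
  exact sum_indicatorVec_of_partition hdisj hcover i

theorem trace_clusterMatrix {C : ι → Finset T} (hne : ∀ t, (C t).Nonempty) :
    (clusterMatrix C).trace = Fintype.card ι := by
  simp [clusterMatrix, trace_sum, trace_vecMulVec, indicatorVec_dotProduct_self,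
    fun t => (hne t).card_pos.ne']

theorem trace_mul_clusterMatrix (D : Matrix T T ℝ) (C : ι → Finset T) :
    (D * clusterMatrix C).trace = ∑ t, ((C t).card : ℝ)⁻¹ * ∑ i ∈ C t, ∑ j ∈ C t, D i j := by
  simp [clusterMatrix, Matrix.mul_sum, trace_sum, mul_vecMulVec, trace_vecMulVec,
    dotProduct_indicatorVec, mulVec]

theorem trace_sqDist_mul_clusterMatrix {E : Type*} [NormedAddCommGroup E] [InnerProductSpace ℝ E]
    (x : T → E) {C : ι → Finset T} (hne : ∀ t, (C t).Nonempty) :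
    ((of fun i j => ‖x i - x j‖ ^ 2) * clusterMatrix C).trace
      = 2 * ∑ t, ∑ i ∈ C t, ‖x i - ((C t).card : ℝ)⁻¹ • ∑ j ∈ C t, x j‖ ^ 2 := by
  rw [trace_mul_clusterMatrix, mul_sum]
  refine sum_congr rfl fun t _ => ?_
  have hcard : ((C t).card : ℝ) ≠ 0 := by exact_mod_cast (hne t).card_pos.ne'
  simp only [of_apply, sum_sum_norm_sub_sq_eq_sum_norm_sub_centroid_sq]
  field_simp

end ClusterMatrix

/-- Given points `x : T → ℝ^m` and a partition of `T` into `k` nonempty parts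
`C 0, …, C (k-1)`, the matrix `X = ∑_t |C t|⁻¹ • 1_{C t} 1_{C t}ᵀ` is feasible
for the Peng–Wei semidefinite relaxation (`X1 = 1`, `tr X = k`, `X` entrywise
nonnegative and positive semidefinite), and its SDP objective value
`(2|T|)⁻¹ tr(D X)` equals the `k`-means objective value of the partition. -/
theorem partition_matrix_feasible_and_value {m k : ℕ} {T : Type*} [Fintype T] [DecidableEq T]
    (x : T → EuclideanSpace ℝ (Fin m)) (C : Fin k → Finset T)
    (hdisj : ∀ t t', t ≠ t' → Disjoint (C t) (C t'))
    (hcover : Finset.univ.biUnion C = (Finset.univ : Finset T))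
    (hne : ∀ t, (C t).Nonempty)
    (X : Matrix T T ℝ)
    (hX : X = ∑ t : Fin k, ((C t).card : ℝ)⁻¹ •
      Matrix.vecMulVec (fun i => if i ∈ C t then (1 : ℝ) else 0)
        (fun j => if j ∈ C t then (1 : ℝ) else 0)) :
    X.mulVec (fun _ => (1 : ℝ)) = (fun _ => (1 : ℝ)) ∧
    X.trace = (k : ℝ) ∧
    (∀ i j, 0 ≤ X i j) ∧
    X.PosSemidef ∧
    (2 * (Fintype.card T : ℝ))⁻¹ * ((Matrix.of fun i j => ‖x i - x j‖ ^ 2) * X).trace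
      = (Fintype.card T : ℝ)⁻¹ *
          ∑ t : Fin k, ∑ i ∈ C t, ‖x i - ((C t).card : ℝ)⁻¹ • ∑ j ∈ C t, x j‖ ^ 2 := by
  obtain rfl : X = clusterMatrix C := hX
  refine ⟨clusterMatrix_mulVec_one hdisj hcover, ?_, clusterMatrix_nonneg C,
    posSemidef_clusterMatrix C, ?_⟩
  · simpa using trace_clusterMatrix hne
  · rw [trace_sqDist_mul_clusterMatrix x hne, mul_inv]
    ring
end

section
/- Let v ∈ ℝ^m be a unit vector, r ≥ 0, and let x_1, …, x_s ∈ ℝ^m satisfy x_i = ε_i r v + g_i with ε_i ∈ {+1, −1} and g_i ∈ ℝ^m. Let G be the m×s matrix whose i-th column is g_i. Then the value of the k-means semidefinite relaxation with k = 2 satisfies val(S-SDP) ≥ (1/s) Σ_{i=1}^s ‖(I − vv^⊤)x_i‖² − (2/s)‖G‖_{2→2}². -/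
open scoped BigOperators

/-- The value of the Peng–Wei semidefinite relaxation of `k`-means for the
points `x : S → ℝ^m`. -/
noncomputable def sdpVal {m : ℕ} {S : Type*} [Fintype S] (k : ℕ)
    (x : S → EuclideanSpace ℝ (Fin m)) : ℝ :=
  sInf {v : ℝ | ∃ X : Matrix S S ℝ,
    X.PosSemidef ∧ (∀ i j, 0 ≤ X i j) ∧
    X.mulVec (fun _ => (1 : ℝ)) = (fun _ => (1 : ℝ)) ∧ X.trace = (k : ℝ) ∧
    v = (2 * (Fintype.card S : ℝ))⁻¹ *
      ((Matrix.of fun i j => ‖x i - x j‖ ^ 2) * X).trace}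

/-- The spectral norm (largest singular value) of a real matrix. -/
noncomputable def specNorm {α β : Type*} [Fintype α] [Fintype β] [DecidableEq β]
    (A : Matrix α β ℝ) : ℝ :=
  ‖LinearMap.toContinuousLinearMap (Matrix.toEuclideanLin A)‖

/-!
For a feasible `X` (symmetric, entrywise nonnegative, rows summing to one) the objective equals
`s⁻¹ (∑ ‖xᵢ‖² - ∑ Xᵢⱼ ⟪xᵢ, xⱼ⟫)`. Split `xᵢ = ⟪xᵢ, v⟫ v + pᵢ` with `pᵢ ⊥ v`; since
`xᵢ - gᵢ ∈ ℝ v`, also `gᵢ = ⟪gᵢ, v⟫ v + pᵢ`. The part along `v` contributes nonnegatively, because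
a symmetric stochastic matrix has quadratic form at most `‖w‖²`, and positive semidefiniteness
gives `∑ Xᵢⱼ ⟪pᵢ, pⱼ⟫ ≤ ∑ Xᵢⱼ ⟪gᵢ, gⱼ⟫ ≤ ‖G‖² tr X = 2 ‖G‖²`. For `s < 2` nothing is feasible and
the value is `sInf ∅ = 0`; the bound is then nonpositive since `∑ ‖gᵢ‖² ≤ s ‖G‖²`.
-/

open Matrix
open scoped InnerProductSpace

section Gram

variable {ι E : Type*} [Fintype ι] [NormedAddCommGroup E] [InnerProductSpace ℝ E]

-- `tr (X Yᵀ Y)` for the matrix `Y` with columns `y i`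
noncomputable def gramForm (X : Matrix ι ι ℝ) (y : ι → E) : ℝ :=
  ∑ i, ∑ j, X i j * ⟪y i, y j⟫_ℝ

theorem gramForm_sum {κ : Type*} (s : Finset κ) (X : κ → Matrix ι ι ℝ) (y : ι → E) :
    gramForm (∑ k ∈ s, X k) y = ∑ k ∈ s, gramForm (X k) y := by
  simp only [gramForm, Matrix.sum_apply, Finset.sum_mul]
  exact (Finset.sum_congr rfl fun _ _ => Finset.sum_comm).trans Finset.sum_comm

theorem gramForm_vecMulVec (u : ι → ℝ) (y : ι → E) :
    gramForm (vecMulVec u u) y = ‖∑ i, u i • y i‖ ^ 2 := by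
  rw [← real_inner_self_eq_norm_sq, sum_inner]
  simp only [gramForm, vecMulVec_apply, inner_sum, real_inner_smul_left, real_inner_smul_right]
  exact Finset.sum_congr rfl fun _ _ => Finset.sum_congr rfl fun _ _ => by ring

theorem gramForm_one [DecidableEq ι] (y : ι → E) : gramForm 1 y = ∑ i, ‖y i‖ ^ 2 := by
  simp [gramForm, one_apply]

theorem gramForm_add_of_inner_eq_zero (X : Matrix ι ι ℝ) {y z : ι → E}
    (h : ∀ i j, ⟪y i, z j⟫_ℝ = 0) :
    gramForm X (y + z) = gramForm X y + gramForm X z := by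
  have h' : ∀ i j, ⟪z i, y j⟫_ℝ = 0 := fun i j => by rw [real_inner_comm]; exact h j i
  simp only [gramForm, Pi.add_apply, inner_add_left, inner_add_right, h, h', add_zero,
    zero_add, mul_add, Finset.sum_add_distrib]

theorem Matrix.PosSemidef.gramForm_nonneg {X : Matrix ι ι ℝ} (hX : X.PosSemidef) (y : ι → E) :
    0 ≤ gramForm X y := by
  obtain ⟨n, u, rfl⟩ := posSemidef_iff_eq_sum_vecMulVec.mp hX
  simp only [star_trivial, gramForm_sum, gramForm_vecMulVec]
  positivity

theorem trace_sqDist_mul {X : Matrix ι ι ℝ} (hX : X.IsSymm)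
    (hrow : X *ᵥ (fun _ => 1) = fun _ => 1) (y : ι → E) :
    ((of fun i j => ‖y i - y j‖ ^ 2) * X).trace = 2 * (∑ i, ‖y i‖ ^ 2 - gramForm X y) := by
  have hrow' : ∀ i, ∑ j, X i j = 1 := fun i => by simpa [mulVec, dotProduct] using congrFun hrow i
  have hcol : ∀ j, ∑ i, X i j = 1 := fun j => by simpa only [hX.apply] using hrow' j
  have expand : ∀ i j, (‖y i‖ ^ 2 - 2 * ⟪y i, y j⟫_ℝ + ‖y j‖ ^ 2) * X i j
      = ‖y i‖ ^ 2 * X i j + ‖y j‖ ^ 2 * X i j - 2 * (X i j * ⟪y i, y j⟫_ℝ) := fun i j => by ring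
  simp only [trace, diag_apply, mul_apply, of_apply, hX.apply _ _, norm_sub_sq_real, expand,
    Finset.sum_add_distrib, Finset.sum_sub_distrib, ← Finset.mul_sum, hrow', gramForm]
  rw [Finset.sum_comm (f := fun i j => ‖y j‖ ^ 2 * X i j)]
  simp only [← Finset.mul_sum, hcol, mul_one]
  ring

theorem gramForm_le_sum_norm_sq {X : Matrix ι ι ℝ} (hX : X.IsSymm) (hnn : ∀ i j, 0 ≤ X i j)
    (hrow : X *ᵥ (fun _ => 1) = fun _ => 1) (y : ι → E) :
    gramForm X y ≤ ∑ i, ‖y i‖ ^ 2 := by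
  have : 0 ≤ ((of fun i j => ‖y i - y j‖ ^ 2) * X).trace :=
    Finset.sum_nonneg fun i _ => Finset.sum_nonneg fun j _ => mul_nonneg (sq_nonneg _) (hnn j i)
  linarith [trace_sqDist_mul hX hrow y]

end Gram

section Projection

variable {E : Type*} [NormedAddCommGroup E] [InnerProductSpace ℝ E] {v : E}

theorem inner_sub_inner_smul_eq_zero (hv : ‖v‖ = 1) (x : E) : ⟪x - ⟪x, v⟫_ℝ • v, v⟫_ℝ = 0 := by
  rw [inner_sub_left, real_inner_smul_left, real_inner_self_eq_norm_sq, hv]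
  ring

theorem smul_add_sub_inner_smul (hv : ‖v‖ = 1) (c : ℝ) (g : E) :
    (c • v + g) - ⟪c • v + g, v⟫_ℝ • v = g - ⟪g, v⟫_ℝ • v := by
  rw [inner_add_left, real_inner_smul_left, real_inner_self_eq_norm_sq, hv, add_smul]
  simp only [one_pow, mul_one]
  abel

theorem norm_sq_eq_inner_sq_add_norm_sub_inner_smul_sq (hv : ‖v‖ = 1) (x : E) :
    ‖x‖ ^ 2 = ‖⟪x, v⟫_ℝ • v‖ ^ 2 + ‖x - ⟪x, v⟫_ℝ • v‖ ^ 2 := by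
  have horth : ⟪⟪x, v⟫_ℝ • v, x - ⟪x, v⟫_ℝ • v⟫_ℝ = 0 := by
    rw [real_inner_smul_left, real_inner_comm (x - _) v, inner_sub_inner_smul_eq_zero hv, mul_zero]
  have h := norm_add_sq_eq_norm_sq_add_norm_sq_real horth
  rw [add_sub_cancel] at h
  simpa only [sq] using h

theorem norm_sub_inner_smul_le (hv : ‖v‖ = 1) (x : E) : ‖x - ⟪x, v⟫_ℝ • v‖ ≤ ‖x‖ := by
  have := norm_sq_eq_inner_sq_add_norm_sub_inner_smul_sq hv x
  nlinarith [sq_nonneg ‖⟪x, v⟫_ℝ • v‖, norm_nonneg x, norm_nonneg (x - ⟪x, v⟫_ℝ • v)]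

variable {ι : Type*} [Fintype ι]

theorem sum_norm_sub_inner_smul_sq_sub_gramForm_le {X : Matrix ι ι ℝ} (hX : X.PosSemidef)
    (hnn : ∀ i j, 0 ≤ X i j) (hrow : X *ᵥ (fun _ => 1) = fun _ => 1) (hv : ‖v‖ = 1)
    (c : ι → ℝ) (g x : ι → E) (hx : ∀ i, x i = c i • v + g i) :
    ∑ i, ‖x i - ⟪x i, v⟫_ℝ • v‖ ^ 2 - gramForm X g ≤ ∑ i, ‖x i‖ ^ 2 - gramForm X x := by
  set p : ι → E := fun i => x i - ⟪x i, v⟫_ℝ • v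
  have hpg : ∀ i, p i = g i - ⟪g i, v⟫_ℝ • v := fun i => by
    simp only [p, hx i, smul_add_sub_inner_smul hv]
  have horth : ∀ (a : ι → ℝ) i j, ⟪a i • v, p j⟫_ℝ = 0 := fun a i j => by
    rw [real_inner_smul_left, real_inner_comm, inner_sub_inner_smul_eq_zero hv, mul_zero]
  have hx' : x = (fun i => ⟪x i, v⟫_ℝ • v) + p := by ext1 i; simp [p]
  have hg' : g = (fun i => ⟪g i, v⟫_ℝ • v) + p := by ext1 i; simp [hpg]
  have hnorm : ∑ i, ‖x i‖ ^ 2 = ∑ i, ‖⟪x i, v⟫_ℝ • v‖ ^ 2 + ∑ i, ‖p i‖ ^ 2 := by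
    rw [← Finset.sum_add_distrib]
    exact Finset.sum_congr rfl fun i _ => norm_sq_eq_inner_sq_add_norm_sub_inner_smul_sq hv (x i)
  have hgx := gramForm_add_of_inner_eq_zero X (horth fun i => ⟪x i, v⟫_ℝ)
  have hgg := gramForm_add_of_inner_eq_zero X (horth fun i => ⟪g i, v⟫_ℝ)
  rw [← hx'] at hgx
  rw [← hg'] at hgg
  have hsymm : X.IsSymm := isHermitian_iff_isSymm.mp hX.isHermitian
  have := gramForm_le_sum_norm_sq hsymm hnn hrow fun i => ⟪x i, v⟫_ℝ • v
  have := hX.gramForm_nonneg fun i => ⟪g i, v⟫_ℝ • v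
  linarith

end Projection

section SpecNorm

variable {ι α : Type*} [Fintype ι] [DecidableEq ι] [Fintype α]

open scoped Matrix.Norms.L2Operator in
theorem norm_sum_smul_le_specNorm_mul (g : ι → EuclideanSpace ℝ α) (u : ι → ℝ) :
    ‖∑ i, u i • g i‖ ≤ specNorm (of fun a i => g i a) * ‖WithLp.toLp 2 u‖ := by
  have hG : ∑ i, u i • g i = WithLp.toLp 2 ((of fun a i => g i a) *ᵥ u) := by
    ext a
    simp [mulVec, dotProduct, mul_comm]
  rw [hG]
  exact l2_opNorm_mulVec _ _

theorem gramForm_le_specNorm_sq_mul_trace (g : ι → EuclideanSpace ℝ α) {X : Matrix ι ι ℝ}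
    (hX : X.PosSemidef) :
    gramForm X g ≤ specNorm (of fun a i => g i a) ^ 2 * X.trace := by
  obtain ⟨n, u, rfl⟩ := posSemidef_iff_eq_sum_vecMulVec.mp hX
  simp only [star_trivial, gramForm_sum, gramForm_vecMulVec, trace_sum, Finset.mul_sum]
  gcongr with k
  have hu : u k ⬝ᵥ u k = ‖WithLp.toLp 2 (u k)‖ ^ 2 := by
    rw [EuclideanSpace.real_norm_sq_eq]
    simp only [dotProduct, sq]
  rw [trace_vecMulVec, hu, ← mul_pow]
  gcongr
  exact norm_sum_smul_le_specNorm_mul g (u k)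

theorem sum_norm_sq_le_card_mul_specNorm_sq (g : ι → EuclideanSpace ℝ α) :
    ∑ i, ‖g i‖ ^ 2 ≤ Fintype.card ι * specNorm (of fun a i => g i a) ^ 2 := by
  simpa [gramForm_one, mul_comm] using gramForm_le_specNorm_sq_mul_trace g PosSemidef.one

theorem sum_norm_sub_inner_smul_sq_le_card_mul_specNorm_sq {v : EuclideanSpace ℝ α}
    (hv : ‖v‖ = 1) (c : ι → ℝ) (g x : ι → EuclideanSpace ℝ α) (hx : ∀ i, x i = c i • v + g i) :
    ∑ i, ‖x i - ⟪x i, v⟫_ℝ • v‖ ^ 2 ≤ Fintype.card ι * specNorm (of fun a i => g i a) ^ 2 := by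
  refine (Finset.sum_le_sum fun i _ => ?_).trans (sum_norm_sq_le_card_mul_specNorm_sq g)
  rw [hx i, smul_add_sub_inner_smul hv]
  gcongr
  exact norm_sub_inner_smul_le hv _

end SpecNorm

section SDP

variable {m : ℕ} {S : Type*} [Fintype S]

theorem sdpVal_eq_zero_of_card_lt {k : ℕ} (x : S → EuclideanSpace ℝ (Fin m))
    (hk : Fintype.card S < k) : sdpVal k x = 0 := by
  rw [sdpVal]
  convert Real.sInf_empty
  refine Set.eq_empty_of_forall_notMem ?_
  rintro _ ⟨X, -, hnn, hrow, htr, -⟩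
  have hrow' : ∀ i, ∑ j, X i j = 1 := fun i => by simpa [mulVec, dotProduct] using congrFun hrow i
  have : X.trace ≤ Fintype.card S := calc
    X.trace ≤ ∑ i, ∑ j, X i j :=
      Finset.sum_le_sum fun i _ => Finset.single_le_sum (fun j _ => hnn i j) (Finset.mem_univ i)
    _ = Fintype.card S := by simp [hrow']
  rw [htr] at this
  exact this.not_gt (by exact_mod_cast hk)

theorem exists_sdp_feasible [DecidableEq S] {k : ℕ} (hk : 1 ≤ k) (hkS : k ≤ Fintype.card S) :
    ∃ X : Matrix S S ℝ, X.PosSemidef ∧ (∀ i j, 0 ≤ X i j) ∧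
      X *ᵥ (fun _ => 1) = (fun _ => 1) ∧ X.trace = k := by
  -- `t • 1 + ((1 - t) / n) • vecMulVec 1 1` has unit row sums and trace `n t + 1 - t`; for
  -- `n = 1` (so `k = 1`) the choice below is `t = 0 / 0 = 0`, which still works.
  obtain ⟨n, hn_card⟩ : ∃ n : ℝ, (Fintype.card S : ℝ) = n := ⟨_, rfl⟩
  set t : ℝ := (k - 1) / (n - 1)
  have hn : 1 ≤ n := by rw [← hn_card]; exact_mod_cast hk.trans hkS
  have hkn : (k : ℝ) ≤ n := by rw [← hn_card]; exact_mod_cast hkS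
  have hk1 : (1 : ℝ) ≤ k := by exact_mod_cast hk
  have ht : 0 ≤ t ∧ t ≤ 1 :=
    ⟨div_nonneg (by linarith) (by linarith), div_le_one_of_le₀ (by linarith) (by linarith)⟩
  have htn : t * (n - 1) = k - 1 := by
    rcases hn.eq_or_lt with h | h
    · simp [← h, show (k : ℝ) = 1 by linarith]
    · exact div_mul_cancel₀ _ (by linarith)
  have hn0 : n ≠ 0 := by linarith
  have hX : ∀ i j, (t • 1 + ((1 - t) / n) • vecMulVec 1 1 : Matrix S S ℝ) i j
      = t * (1 : Matrix S S ℝ) i j + (1 - t) / n := fun i j => by simp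
  refine ⟨t • 1 + ((1 - t) / n) • vecMulVec 1 1, ?_, fun i j => ?_, ?_, ?_⟩
  · exact (PosSemidef.one.smul ht.1).add
      ((posSemidef_vecMulVec_self_star 1).smul (div_nonneg (by linarith) (by linarith)))
  · have : 0 ≤ (1 : Matrix S S ℝ) i j := by by_cases h : i = j <;> simp [one_apply, h]
    have : 0 ≤ (1 - t) / n := div_nonneg (by linarith) (by linarith)
    rw [hX]
    positivity
  · ext i
    simp only [mulVec, dotProduct, hX, mul_one, Finset.sum_add_distrib, ← Finset.mul_sum,
      one_apply, Finset.sum_ite_eq, Finset.mem_univ, if_true, Finset.sum_const,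
      Finset.card_univ, nsmul_eq_mul, hn_card]
    field_simp
    ring
  · simp only [trace, diag_apply, hX, one_apply_eq, Finset.sum_add_distrib, Finset.sum_const,
      Finset.card_univ, nsmul_eq_mul, hn_card]
    field_simp
    linarith

theorem le_sdpVal {k : ℕ} (x : S → EuclideanSpace ℝ (Fin m)) {b : ℝ} (hk : 1 ≤ k)
    (hkS : k ≤ Fintype.card S)
    (h : ∀ X : Matrix S S ℝ, X.PosSemidef → (∀ i j, 0 ≤ X i j) →
      X *ᵥ (fun _ => 1) = (fun _ => 1) → X.trace = k →
      b ≤ (2 * (Fintype.card S : ℝ))⁻¹ * ((of fun i j => ‖x i - x j‖ ^ 2) * X).trace) :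
    b ≤ sdpVal k x := by
  classical
  obtain ⟨X, hX, hnn, hrow, htr⟩ := exists_sdp_feasible (S := S) hk hkS
  refine le_csInf ⟨_, X, hX, hnn, hrow, htr, rfl⟩ ?_
  rintro _ ⟨X, hX, hnn, hrow, htr, rfl⟩
  exact h X hX hnn hrow htr

end SDP

theorem sdpVal_lower_bound_general {m s : ℕ}
    (v : EuclideanSpace ℝ (Fin m)) (hv : ‖v‖ = 1) (r : ℝ)
    (ε : Fin s → ℝ)
    (g x : Fin s → EuclideanSpace ℝ (Fin m))
    (hx : ∀ i, x i = ε i • (r • v) + g i)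
    (G : Matrix (Fin m) (Fin s) ℝ) (hG : G = Matrix.of fun a i => g i a) :
    (s : ℝ)⁻¹ * ∑ i, ‖x i - (inner ℝ (x i) v : ℝ) • v‖ ^ 2
        - (2 / (s : ℝ)) * specNorm G ^ 2
      ≤ sdpVal 2 x := by
  subst hG
  have hx' : ∀ i, x i = (ε i * r) • v + g i := fun i => by rw [hx i, smul_smul]
  rw [show ∀ P N : ℝ, (s : ℝ)⁻¹ * P - 2 / s * N = (s : ℝ)⁻¹ * (P - 2 * N) by intros; ring]
  rcases lt_or_ge s 2 with hs | hs
  · rw [sdpVal_eq_zero_of_card_lt x (by simpa using hs)]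
    have hproj := sum_norm_sub_inner_smul_sq_le_card_mul_specNorm_sq hv _ g x hx'
    have hsN : (s : ℝ) * specNorm (of fun a i => g i a) ^ 2
        ≤ 2 * specNorm (of fun a i => g i a) ^ 2 :=
      mul_le_mul_of_nonneg_right (by exact_mod_cast hs.le) (sq_nonneg _)
    rw [Fintype.card_fin] at hproj
    exact mul_nonpos_of_nonneg_of_nonpos (by positivity) (by linarith)
  · refine le_sdpVal x one_le_two (by simpa using hs) fun X hX hnn hrow htr => ?_
    have hgx := sum_norm_sub_inner_smul_sq_sub_gramForm_le hX hnn hrow hv _ g x hx'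
    have hg := gramForm_le_specNorm_sq_mul_trace g hX
    rw [htr] at hg
    rw [trace_sqDist_mul (isHermitian_iff_isSymm.mp hX.isHermitian) hrow, Fintype.card_fin,
      mul_inv, mul_mul_mul_comm, inv_mul_cancel₀ two_ne_zero, one_mul]
    push_cast at hg
    exact mul_le_mul_of_nonneg_left (by linarith) (by positivity)

/-- For data of the form `x i = ε i • (r • v) + g i` with `v` a unit vector
and `ε i = ±1`, the value of the `k = 2` semidefinite relaxation is bounded
below by `(1/s) ∑ᵢ ‖(I - vvᵀ) x i‖² - (2/s) ‖G‖²`, where `G` has `i`-th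
column `g i` and `(I - vvᵀ) x i = x i - ⟨x i, v⟩ v`. -/
theorem sdpVal_lower_bound {m s : ℕ}
    (v : EuclideanSpace ℝ (Fin m)) (hv : ‖v‖ = 1) (r : ℝ) (hr : 0 ≤ r)
    (ε : Fin s → ℝ) (hε : ∀ i, ε i = 1 ∨ ε i = -1)
    (g x : Fin s → EuclideanSpace ℝ (Fin m))
    (hx : ∀ i, x i = ε i • (r • v) + g i)
    (G : Matrix (Fin m) (Fin s) ℝ) (hG : G = Matrix.of fun a i => g i a) :
    (s : ℝ)⁻¹ * ∑ i, ‖x i - (inner ℝ (x i) v : ℝ) • v‖ ^ 2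
        - (2 / (s : ℝ)) * specNorm G ^ 2
      ≤ sdpVal 2 x :=
  sdpVal_lower_bound_general v hv r ε g x hx G hG
end
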